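/- Average drift theorem (upper bound): if a nonnegative distance function d vanishes exactly on the absorbing optimal set, the chain is convergent, and for every t the average drift satisfies Δ̄_t ≥ c > 0, then the expected hitting time of the optimal set satisfies E[τ] ≤ E[d(Φ_0)]/c. -/

import Mathlib

/-!
Weighting the pointwise drifts by `P(Φ_t = x)` turns the average drift into
`Δ̄_t · P(Φ_t ∉ S_opt) = E[d(Φ_t)] - E[d(Φ_{t+1})]`: states in the absorbing set have
`d = 0` and only move to states with `d = 0`. So `c · P(Φ_t ∉ S_opt)` is bounded by the
one-step decrease of `E[d(Φ_t)] ≥ 0`, and telescoping gives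
`∑_t P(Φ_t ∉ S_opt) ≤ E[d(Φ_0)] / c`; the left side dominates `E[τ]`.
-/

open MeasureTheory Filter

/-- First hitting time of the set `Sopt` by the process `Φ`. -/
noncomputable def hittingTime {Ω S : Type*} (Φ : ℕ → Ω → S) (Sopt : Finset S)
    (ω : Ω) : ℕ := sInf {t | Φ t ω ∈ Sopt}

/-- Probability that the process is at state `x` at time `t`. -/
noncomputable def pstate {Ω S : Type*} [MeasurableSpace Ω] (μ : Measure Ω)
    (Φ : ℕ → Ω → S) (t : ℕ) (x : S) : ℝ := (μ {ω | Φ t ω = x}).toReal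

/-- Point-wise drift at time `t` in state `x` with respect to the distance `d`:
`Δ(x) = ∑_y (d x - d y) P(Φ_{t+1} = y | Φ_t = x)`. -/
noncomputable def drift {Ω S : Type*} [Fintype S] [DecidableEq S] [MeasurableSpace Ω]
    (μ : Measure Ω) (Φ : ℕ → Ω → S) (d : S → ℝ) (t : ℕ) (x : S) : ℝ :=
  ∑ y : S, (d x - d y) *
    ((μ {ω | Φ t ω = x ∧ Φ (t + 1) ω = y}).toReal / (μ {ω | Φ t ω = x}).toReal)

/-- Average drift at time `t`:
`Δ̄_t = ∑_{x ∉ Sopt} Δ(x) · P(Φ_t = x)/P(Φ_t ∉ Sopt)`, set to `0` when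
`P(Φ_t ∉ Sopt) = 0`. -/
noncomputable def avgDrift {Ω S : Type*} [Fintype S] [DecidableEq S] [MeasurableSpace Ω]
    (μ : Measure Ω) (Φ : ℕ → Ω → S) (Sopt : Finset S) (d : S → ℝ) (t : ℕ) : ℝ :=
  if (μ {ω | Φ t ω ∉ Sopt}).toReal = 0 then 0
  else ∑ x ∈ Soptᶜ, drift μ Φ d t x *
    (pstate μ Φ t x / (μ {ω | Φ t ω ∉ Sopt}).toReal)

open Finset

section FiniteStateProcess

variable {Ω S : Type*} [MeasurableSpace Ω] {μ : Measure Ω} {Φ : ℕ → Ω → S}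

theorem toReal_measure_eq_sum_inter_fiber [Fintype S] [IsFiniteMeasure μ] {f : Ω → S}
    (hf : ∀ x, MeasurableSet {ω | f ω = x}) {A : Set Ω} :
    (μ A).toReal = ∑ x, (μ (A ∩ {ω | f ω = x})).toReal := by
  have h := sum_measure_preimage_singleton (μ := μ.restrict A) univ (fun y _ => hf y)
  rw [coe_univ, Set.preimage_univ, Measure.restrict_apply_univ] at h
  rw [← h, ENNReal.toReal_sum fun x _ => measure_ne_top _ _]
  refine sum_congr rfl fun x _ => ?_
  rw [show f ⁻¹' {x} = {ω | f ω = x} from rfl, Measure.restrict_apply (hf x), Set.inter_comm]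

theorem measurableSet_notMem_of_fiber {f : Ω → S} (hf : ∀ x, MeasurableSet {ω | f ω = x})
    (O : Finset S) : MeasurableSet {ω | f ω ∉ O} := by
  have h : {ω | f ω ∉ O} = (⋃ x ∈ O, {ω | f ω = x})ᶜ := by ext; simp
  exact h ▸ (O.measurableSet_biUnion fun x _ => hf x).compl

noncomputable def jointPstate (μ : Measure Ω) (Φ : ℕ → Ω → S) (t : ℕ) (x y : S) : ℝ :=
  (μ {ω | Φ t ω = x ∧ Φ (t + 1) ω = y}).toReal

noncomputable def expectedDist [Fintype S] (μ : Measure Ω) (Φ : ℕ → Ω → S) (d : S → ℝ)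
    (t : ℕ) : ℝ :=
  ∑ x, d x * pstate μ Φ t x

theorem jointPstate_eq_zero_of_absorbing {O : Finset S}
    (habs : ∀ ω t, Φ t ω ∈ O → Φ (t + 1) ω ∈ O) {t : ℕ} {x y : S} (hx : x ∈ O)
    (hy : y ∉ O) :
    jointPstate μ Φ t x y = 0 := by
  have h : {ω | Φ t ω = x ∧ Φ (t + 1) ω = y} = ∅ := by
    ext ω
    simp only [Set.mem_ofPred_eq, Set.mem_empty_iff_false, iff_false, not_and]
    rintro rfl rfl
    exact hy (habs ω t hx)
  simp [jointPstate, h]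

theorem avgDrift_mul_measure_notMem [Fintype S] [DecidableEq S] {O : Finset S} {d : S → ℝ}
    {t : ℕ}     (h : (μ {ω | Φ t ω ∉ O}).toReal ≠ 0) :
    avgDrift μ Φ O d t * (μ {ω | Φ t ω ∉ O}).toReal
      = ∑ x ∈ Oᶜ, drift μ Φ d t x * pstate μ Φ t x := by
  rw [avgDrift, if_neg h, sum_mul]
  exact sum_congr rfl fun x _ => by field_simp

variable [IsFiniteMeasure μ]

theorem jointPstate_eq_zero_of_pstate_eq_zero {t : ℕ} {x : S} (h : pstate μ Φ t x = 0) (y : S) :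
    jointPstate μ Φ t x y = 0 := by
  have hx : μ {ω | Φ t ω = x} = 0 := by
    simpa [pstate, ENNReal.toReal_eq_zero_iff, measure_ne_top] using h
  have hxy : μ {ω | Φ t ω = x ∧ Φ (t + 1) ω = y} = 0 :=
    measure_mono_null (fun ω h => h.1) hx
  simp [jointPstate, hxy]

variable [Fintype S]

theorem sum_jointPstate_right (hmeas : ∀ t x, MeasurableSet {ω | Φ t ω = x}) (t : ℕ)
    (x : S) :
    ∑ y, jointPstate μ Φ t x y = pstate μ Φ t x :=
  (toReal_measure_eq_sum_inter_fiber (hmeas (t + 1))).symm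

theorem sum_jointPstate_left (hmeas : ∀ t x, MeasurableSet {ω | Φ t ω = x}) (t : ℕ) (y : S) :
    ∑ x, jointPstate μ Φ t x y = pstate μ Φ (t + 1) y := by
  rw [pstate, toReal_measure_eq_sum_inter_fiber (hmeas t)]
  exact sum_congr rfl fun x _ => by rw [Set.inter_comm]; rfl

theorem sum_sum_sub_mul_jointPstate (hmeas : ∀ t x, MeasurableSet {ω | Φ t ω = x})
    (d : S → ℝ) (t : ℕ) :
    ∑ x, ∑ y, (d x - d y) * jointPstate μ Φ t x y
      = expectedDist μ Φ d t - expectedDist μ Φ d (t + 1) := by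
  have h_now : ∑ x, ∑ y, d x * jointPstate μ Φ t x y = expectedDist μ Φ d t := by
    simp only [← mul_sum, sum_jointPstate_right hmeas, expectedDist]
  have h_next : ∑ x, ∑ y, d y * jointPstate μ Φ t x y = expectedDist μ Φ d (t + 1) := by
    rw [sum_comm]
    simp only [← mul_sum, sum_jointPstate_left hmeas, expectedDist]
  simp only [sub_mul, sum_sub_distrib, h_now, h_next]

variable [DecidableEq S]

theorem drift_mul_pstate (d : S → ℝ) (t : ℕ) (x : S) :
    drift μ Φ d t x * pstate μ Φ t x = ∑ y, (d x - d y) * jointPstate μ Φ t x y := by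
  by_cases hx : pstate μ Φ t x = 0
  · simp [hx, jointPstate_eq_zero_of_pstate_eq_zero hx]
  · rw [drift, sum_mul]
    refine sum_congr rfl fun y _ => ?_
    rw [pstate] at hx
    rw [pstate, jointPstate]
    field_simp

theorem sum_compl_drift_mul_pstate (hmeas : ∀ t x, MeasurableSet {ω | Φ t ω = x})
    {O : Finset S} (habs : ∀ ω t, Φ t ω ∈ O → Φ (t + 1) ω ∈ O) {d : S → ℝ}
    (hd : ∀ x ∈ O, d x = 0) (t : ℕ) :
    ∑ x ∈ Oᶜ, drift μ Φ d t x * pstate μ Φ t x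
      = expectedDist μ Φ d t - expectedDist μ Φ d (t + 1) := by
  simp only [drift_mul_pstate, ← sum_sum_sub_mul_jointPstate hmeas d t]
  refine sum_subset (subset_univ _) fun x _ hx => ?_
  have hxO : x ∈ O := by simpa using hx
  refine sum_eq_zero fun y _ => ?_
  by_cases hy : y ∈ O
  · simp [hd x hxO, hd y hy]
  · simp [jointPstate_eq_zero_of_absorbing habs hxO hy]

end FiniteStateProcess

theorem sum_range_le_of_le_sub_succ {f g : ℕ → ℝ} (hfg : ∀ t, f t ≤ g t - g (t + 1))
    (hg : ∀ t, 0 ≤ g t) (T : ℕ) : ∑ t ∈ range T, f t ≤ g 0 := by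
  have h := sum_le_sum fun t (_ : t ∈ range T) => hfg t
  rw [sum_range_sub'] at h
  linarith [hg T]

theorem hittingTime_le_tsum_indicator {Ω S : Type*} (Φ : ℕ → Ω → S) (O : Finset S)
    (ω : Ω) :
    (hittingTime Φ O ω : ENNReal) ≤ ∑' t, {ω' | Φ t ω' ∉ O}.indicator 1 ω := by
  have h_before : ∀ t ∈ range (hittingTime Φ O ω),
      {ω' | Φ t ω' ∉ O}.indicator 1 ω = (1 : ENNReal) := fun t ht =>
    Set.indicator_of_mem (show ω ∈ {ω' | Φ t ω' ∉ O} from fun hmem =>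
      not_le.2 (mem_range.1 ht) (Nat.sInf_le hmem)) _
  calc (hittingTime Φ O ω : ENNReal)
      = ∑ t ∈ range (hittingTime Φ O ω), {ω' | Φ t ω' ∉ O}.indicator 1 ω := by
        simp [sum_congr rfl h_before]
    _ ≤ _ := ENNReal.sum_le_tsum _

theorem lintegral_hittingTime_le_tsum {Ω S : Type*} [MeasurableSpace Ω] (μ : Measure Ω)
    (Φ : ℕ → Ω → S) (O : Finset S) (hO : ∀ t, MeasurableSet {ω | Φ t ω ∉ O}) :
    ∫⁻ ω, (hittingTime Φ O ω : ENNReal) ∂μ ≤ ∑' t, μ {ω | Φ t ω ∉ O} :=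
  calc ∫⁻ ω, (hittingTime Φ O ω : ENNReal) ∂μ
      ≤ ∫⁻ ω, ∑' t, {ω' | Φ t ω' ∉ O}.indicator 1 ω ∂μ :=
        lintegral_mono (hittingTime_le_tsum_indicator Φ O)
    _ = ∑' t, μ {ω | Φ t ω ∉ O} := by
        rw [lintegral_tsum fun t => (measurable_one.indicator (hO t)).aemeasurable]
        simp [lintegral_indicator_one (hO _)]

theorem average_drift_upper_bound_general
    {Ω S : Type*} [Fintype S] [DecidableEq S] [MeasurableSpace Ω]
    (μ : Measure Ω) [IsProbabilityMeasure μ]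
    (Φ : ℕ → Ω → S) (Sopt : Finset S) (d : S → ℝ) (c : ℝ)
    (hmeas : ∀ t x, MeasurableSet {ω | Φ t ω = x})
    (habs : ∀ ω t, Φ t ω ∈ Sopt → Φ (t + 1) ω ∈ Sopt)
    (hdnn : ∀ x, 0 ≤ d x)
    (hd0 : ∀ x, d x = 0 ↔ x ∈ Sopt)
    (hc : 0 < c)
    (hdrift : ∀ t, c ≤ avgDrift μ Φ Sopt d t) :
    ∫⁻ ω, (hittingTime Φ Sopt ω : ENNReal) ∂μ
      ≤ ENNReal.ofReal ((∑ x : S, d x * pstate μ Φ 0 x) / c) := by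
  set p : ℕ → ℝ := fun t => (μ {ω | Φ t ω ∉ Sopt}).toReal
  have hstep : ∀ t, c * p t ≤ expectedDist μ Φ d t - expectedDist μ Φ d (t + 1) := by
    intro t
    have hp : p t ≠ 0 := fun h => by
      have := hdrift t
      rw [avgDrift, if_pos h] at this
      linarith
    rw [← sum_compl_drift_mul_pstate hmeas habs (fun x => (hd0 x).2),
      ← avgDrift_mul_measure_notMem hp]
    exact mul_le_mul_of_nonneg_right (hdrift t) ENNReal.toReal_nonneg
  have hsum : ∀ T, ∑ t ∈ range T, p t ≤ expectedDist μ Φ d 0 / c := fun T => by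
    rw [le_div_iff₀' hc, mul_sum]
    exact sum_range_le_of_le_sub_succ hstep
      (fun t => sum_nonneg fun x _ => mul_nonneg (hdnn x) ENNReal.toReal_nonneg) T
  refine (lintegral_hittingTime_le_tsum μ Φ Sopt
    fun t => measurableSet_notMem_of_fiber (hmeas t) Sopt).trans
    (ENNReal.tsum_le_of_sum_range_le fun T => ?_)
  rw [← ENNReal.ofReal_toReal (ENNReal.sum_ne_top.2 fun t _ => measure_ne_top μ _),
    ENNReal.toReal_sum fun t _ => measure_ne_top μ _]
  exact ENNReal.ofReal_le_ofReal (hsum T)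

/-- Average drift theorem (upper bound): if the nonnegative distance `d`
vanishes exactly on the absorbing optimal set, the chain is convergent, and
the average drift is at least `c > 0` at every time, then the expected hitting
time is at most `E[d(Φ_0)]/c`. -/
theorem average_drift_upper_bound
    {Ω S : Type*} [Fintype S] [DecidableEq S] [MeasurableSpace Ω]
    (μ : Measure Ω) [IsProbabilityMeasure μ]
    (Φ : ℕ → Ω → S) (Sopt : Finset S) (d : S → ℝ) (c : ℝ)
    (hmeas : ∀ t x, MeasurableSet {ω | Φ t ω = x})
    (habs : ∀ ω t, Φ t ω ∈ Sopt → Φ (t + 1) ω ∈ Sopt)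
    (hdnn : ∀ x, 0 ≤ d x)
    (hd0 : ∀ x, d x = 0 ↔ x ∈ Sopt)
    (hconv : Tendsto (fun t => μ {ω | Φ t ω ∉ Sopt}) atTop (nhds 0))
    (hc : 0 < c)
    (hdrift : ∀ t, c ≤ avgDrift μ Φ Sopt d t) :
    ∫⁻ ω, (hittingTime Φ Sopt ω : ENNReal) ∂μ
      ≤ ENNReal.ofReal ((∑ x : S, d x * pstate μ Φ 0 x) / c) :=
  average_drift_upper_bound_general μ Φ Sopt d c hmeas habs hdnn hd0 hc hdrift
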